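/- With the notation of the bi-Lipschitz gluing map φ: if a ∈ S_k and b ∈ S_i with k ≥ i+2 and ‖a‖ ≥ ‖b‖, then ‖a‖/2 ≤ ‖φ(a)−φ(b)‖ ≤ ‖a‖+‖b‖, and also ‖a‖/2 ≤ ‖a−b‖ ≤ 2‖a‖; consequently (1/4)‖a−b‖ ≤ ‖φ(a)−φ(b)‖ ≤ 4‖a−b‖. -/

import Mathlib

/-! The coordinates of `φ a - φ b` in the four blocks `Yᵢ, Yᵢ₊₁, Yₖ, Yₖ₊₁` are `-d₁ Eᵢ b, -d₂ Eᵢ₊₁ b,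
c₁ Eₖ a, c₂ Eₖ₊₁ a` with `c₁ + c₂ = d₁ + d₂ = 1`. Each coordinate is bounded by the whole vector,
and one of `c₁, c₂` is at least `1/2`, so `‖φ a - φ b‖ ≥ ‖a‖ / 2`; a convex combination of vectors of
norm `‖a‖` has norm at most `‖a‖`, whence `‖φ a - φ b‖ ≤ ‖a‖ + ‖b‖`. Since `k ≥ i + 2`,
`‖b‖ ≤ 2 ^ i ≤ 2 ^ (k - 2) ≤ ‖a‖ / 2`, so `‖a - b‖` is comparable to `‖a‖` as well. -/

theorem two_zpow_eq_two_mul_two_zpow_sub_one (k : ℤ) : (2 : ℝ) ^ k = 2 * 2 ^ (k - 1) := by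
  rw [← zpow_one_add₀ two_ne_zero]
  ring_nf

theorem shell_weights_nonneg_and_add_eq_one {k : ℤ} {t : ℝ} (h₁ : (2 : ℝ) ^ (k - 1) ≤ t)
    (h₂ : t ≤ (2 : ℝ) ^ k) :
    0 ≤ ((2 : ℝ) ^ k - t) / 2 ^ (k - 1) ∧ 0 ≤ (t - (2 : ℝ) ^ (k - 1)) / 2 ^ (k - 1) ∧
      ((2 : ℝ) ^ k - t) / 2 ^ (k - 1) + (t - (2 : ℝ) ^ (k - 1)) / 2 ^ (k - 1) = 1 := by
  have hp : (0 : ℝ) < 2 ^ (k - 1) := by positivity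
  refine ⟨div_nonneg (by linarith) hp.le, div_nonneg (by linarith) hp.le, ?_⟩
  rw [← add_div, div_eq_one_iff_eq hp.ne', two_zpow_eq_two_mul_two_zpow_sub_one k]
  ring

theorem two_zpow_le_half_two_zpow_sub_one {i k : ℤ} (hik : i + 2 ≤ k) :
    (2 : ℝ) ^ i ≤ 2 ^ (k - 1) / 2 := by
  rw [le_div_iff₀ two_pos, ← zpow_add_one₀ two_ne_zero]
  exact zpow_le_zpow_right₀ one_le_two (by omega)

section NormedSpace

variable {Y : Type*} [SeminormedAddCommGroup Y] [NormedSpace ℝ Y]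

theorem norm_smul_add_smul_le {c d r : ℝ} (hc : 0 ≤ c) (hd : 0 ≤ d) (hcd : c + d = 1)
    {u v : Y} (hu : ‖u‖ ≤ r) (hv : ‖v‖ ≤ r) : ‖c • u + d • v‖ ≤ r := by
  simpa using convex_closedBall (0 : Y) r (by simpa using hu) (by simpa using hv) hc hd hcd

theorem half_le_of_norm_smul_le {c d r N : ℝ} (hcd : c + d = 1) {u v : Y}
    (hu : ‖u‖ = r) (hv : ‖v‖ = r) (hcu : ‖c • u‖ ≤ N) (hdv : ‖d • v‖ ≤ N) : r / 2 ≤ N := by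
  rw [norm_smul, Real.norm_eq_abs, hu] at hcu
  rw [norm_smul, Real.norm_eq_abs, hv] at hdv
  have : r ≤ |c| * r + |d| * r := by
    rw [← add_mul]
    refine le_mul_of_one_le_left (hu ▸ norm_nonneg u) ?_
    rw [← hcd]
    exact (le_abs_self _).trans (abs_add_le c d)
  linarith

end NormedSpace

theorem norm_sub_bounds_of_norm_le_half {Z : Type*} [SeminormedAddCommGroup Z] {a b : Z}
    (hb : ‖b‖ ≤ ‖a‖ / 2) : ‖a‖ / 2 ≤ ‖a - b‖ ∧ ‖a - b‖ ≤ 2 * ‖a‖ :=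
  ⟨by linarith [norm_sub_norm_le a b], by linarith [norm_sub_le a b, norm_nonneg b]⟩

section GradedFamily

variable {ι R Y : Type*} [Ring R] [NormedAddCommGroup Y] [Module R Y]
  {V : ι → Submodule R Y}

theorem pi_single_mem_of_mem [DecidableEq ι] {j : ι} {u : Y} (hu : u ∈ V j) (l : ι) :
    (Pi.single j u : ι → Y) l ∈ V l := by
  rcases eq_or_ne l j with rfl | h
  · simpa using hu
  · simp [h]

theorem norm_le_norm_add_sub_add [DecidableEq ι]
    (hV : ∀ y : ι → Y, (∀ i, y i ∈ V i) → Summable y → ∀ j, ‖y j‖ ≤ ‖∑' i, y i‖)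
    {j j' l l' : ι} (hj' : j' ≠ j) (hl : l ≠ j) (hl' : l' ≠ j) {u u' v v' : Y}
    (hu : u ∈ V j) (hu' : u' ∈ V j') (hv : v ∈ V l) (hv' : v' ∈ V l') :
    ‖u‖ ≤ ‖u + u' - (v + v')‖ := by
  have hsum := ((hasSum_pi_single j u).add (hasSum_pi_single j' u')).sub
    ((hasSum_pi_single l v).add (hasSum_pi_single l' v'))
  have hmem (m : ι) :
      (Pi.single j u + Pi.single j' u' - (Pi.single l v + Pi.single l' v') : ι → Y) m ∈ V m :=
    sub_mem (add_mem (pi_single_mem_of_mem hu m) (pi_single_mem_of_mem hu' m))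
      (add_mem (pi_single_mem_of_mem hv m) (pi_single_mem_of_mem hv' m))
  simpa [hj', hl, hl', hsum.tsum_eq] using hV _ hmem hsum.summable j

end GradedFamily

theorem gluing_distant_shells {Z Y : Type*}
    [NormedAddCommGroup Z] [NormedSpace ℝ Z]
    [NormedAddCommGroup Y] [NormedSpace ℝ Y]
    (Zsub : ℤ → Submodule ℝ Z)
    (Ysub : ℤ → Submodule ℝ Y)
    (hmono : ∀ y : ℤ → Y, (∀ i, y i ∈ Ysub i) → Summable y →
      ∀ j : ℤ, ‖y j‖ ≤ ‖∑' i, y i‖)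
    (E : ∀ i : ℤ, (Zsub i) →ₗ[ℝ] Y)
    (hEiso : ∀ (i : ℤ) (z : Zsub i), ‖E i z‖ = ‖(z : Z)‖)
    (hErange : ∀ (i : ℤ) (z : Zsub i), E i z ∈ Ysub i)
    (φ : Z → Y) (a b : Z)
    (i k : ℤ) (hik : i + 2 ≤ k)
    (hb1 : (2:ℝ) ^ (i - 1) ≤ ‖b‖) (hb2 : ‖b‖ ≤ (2:ℝ) ^ i)
    (ha1 : (2:ℝ) ^ (k - 1) ≤ ‖a‖) (ha2 : ‖a‖ ≤ (2:ℝ) ^ k)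
    (haZ : a ∈ Zsub k) (haZ' : a ∈ Zsub (k + 1))
    (hbZ : b ∈ Zsub i) (hbZ' : b ∈ Zsub (i + 1))
    (hφa : φ a = (((2:ℝ) ^ k - ‖a‖) / (2:ℝ) ^ (k - 1)) • E k ⟨a, haZ⟩
        + ((‖a‖ - (2:ℝ) ^ (k - 1)) / (2:ℝ) ^ (k - 1)) • E (k + 1) ⟨a, haZ'⟩)
    (hφb : φ b = (((2:ℝ) ^ i - ‖b‖) / (2:ℝ) ^ (i - 1)) • E i ⟨b, hbZ⟩
        + ((‖b‖ - (2:ℝ) ^ (i - 1)) / (2:ℝ) ^ (i - 1)) • E (i + 1) ⟨b, hbZ'⟩) :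
    (‖a‖ / 2 ≤ ‖φ a - φ b‖ ∧ ‖φ a - φ b‖ ≤ ‖a‖ + ‖b‖) ∧
    (‖a‖ / 2 ≤ ‖a - b‖ ∧ ‖a - b‖ ≤ 2 * ‖a‖) ∧
    ((1 / 4) * ‖a - b‖ ≤ ‖φ a - φ b‖ ∧ ‖φ a - φ b‖ ≤ 4 * ‖a - b‖) := by
  obtain ⟨hc₁, hc₂, hc⟩ := shell_weights_nonneg_and_add_eq_one ha1 ha2
  obtain ⟨hd₁, hd₂, hd⟩ := shell_weights_nonneg_and_add_eq_one hb1 hb2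
  have hφa_le : ‖φ a‖ ≤ ‖a‖ :=
    hφa ▸ norm_smul_add_smul_le hc₁ hc₂ hc (hEiso _ _).le (hEiso _ _).le
  have hφb_le : ‖φ b‖ ≤ ‖b‖ :=
    hφb ▸ norm_smul_add_smul_le hd₁ hd₂ hd (hEiso _ _).le (hEiso _ _).le
  have hmem (j : ℤ) (c : ℝ) (z : Zsub j) : c • E j z ∈ Ysub j :=
    Submodule.smul_mem _ c (hErange j z)
  have hlow : ‖a‖ / 2 ≤ ‖φ a - φ b‖ := by
    rw [hφa, hφb]
    refine half_le_of_norm_smul_le hc (hEiso k ⟨a, haZ⟩) (hEiso (k + 1) ⟨a, haZ'⟩) ?_ ?_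
    · exact norm_le_norm_add_sub_add hmono (by omega) (by omega) (by omega)
        (hmem _ _ _) (hmem _ _ _) (hmem _ _ _) (hmem _ _ _)
    · rw [add_comm (_ • E k _)]
      exact norm_le_norm_add_sub_add hmono (by omega) (by omega) (by omega)
        (hmem _ _ _) (hmem _ _ _) (hmem _ _ _) (hmem _ _ _)
  have hup : ‖φ a - φ b‖ ≤ ‖a‖ + ‖b‖ := (norm_sub_le _ _).trans (add_le_add hφa_le hφb_le)
  have hb_half : ‖b‖ ≤ ‖a‖ / 2 := by linarith [two_zpow_le_half_two_zpow_sub_one hik]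
  have hab := norm_sub_bounds_of_norm_le_half hb_half
  refine ⟨⟨hlow, hup⟩, hab, ?_, ?_⟩ <;> linarith [hab.1, hab.2]
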